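/- Let (T,R) be a 3-hypertournament on a 4-element linearly ordered set whose associated 3-uniform hypergraph (via the order) has an odd number of hyperedges. Then for every linear order on T, the associated hypergraph has an odd number of hyperedges. -/
import Mathlib

def IsHyper3 {T : Type*} (R : T → T → T → Prop) : Prop :=
  (∀ a b c, R a b c → a ≠ b ∧ b ≠ c ∧ a ≠ c) ∧
  (∀ a b c, R a b c → R b c a) ∧
  (∀ a b c, a ≠ b → b ≠ c → a ≠ c → (R a b c ↔ ¬ R a c b))

/-- Number of hyperedges of the 3-uniform hypergraph associated to R via the strict
linear order r (each hyperedge is recorded by its unique r-increasing triple). -/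
noncomputable def edgeCount {T : Type*} (R : T → T → T → Prop) (r : T → T → Prop) : ℕ :=
  {t : T × T × T | r t.1 t.2.1 ∧ r t.2.1 t.2.2 ∧ R t.1 t.2.1 t.2.2}.ncard

def evalB (v : Fin 4 → Bool) : Fin 4 → Fin 4 → Fin 4 → Bool := fun x y z =>
  match x, y, z with
  | 0, 1, 2 => v 3
  | 0, 1, 3 => v 2
  | 0, 2, 1 => !v 3
  | 0, 2, 3 => v 1
  | 0, 3, 1 => !v 2
  | 0, 3, 2 => !v 1
  | 1, 0, 2 => !v 3
  | 1, 0, 3 => !v 2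
  | 1, 2, 0 => v 3
  | 1, 2, 3 => v 0
  | 1, 3, 0 => v 2
  | 1, 3, 2 => !v 0
  | 2, 0, 1 => v 3
  | 2, 0, 3 => !v 1
  | 2, 1, 0 => !v 3
  | 2, 1, 3 => !v 0
  | 2, 3, 0 => v 1
  | 2, 3, 1 => v 0
  | 3, 0, 1 => v 2
  | 3, 0, 2 => v 1
  | 3, 1, 0 => !v 2
  | 3, 1, 2 => v 0
  | 3, 2, 0 => !v 1
  | 3, 2, 1 => !v 0
  | _, _, _ => false


def cntB (v : Fin 4 → Bool) (f : Fin 4 → Fin 4) : ℕ :=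
  (evalB v (f 0) (f 1) (f 2)).toNat + ((evalB v (f 0) (f 1) (f 3)).toNat +
  ((evalB v (f 0) (f 2) (f 3)).toNat + (evalB v (f 1) (f 2) (f 3)).toNat))

set_option maxRecDepth 10000 in
lemma cntB_parity : ∀ (v : Fin 4 → Bool) (f : Fin 4 → Fin 4), Function.Injective f →
    cntB v f % 2 = cntB v id % 2 := by decide

open Classical in
noncomputable def N4 (S : Fin 4 → Fin 4 → Fin 4 → Prop) : ℕ :=
  (if S 0 1 2 then 1 else 0) + ((if S 0 1 3 then 1 else 0) +
  ((if S 0 2 3 then 1 else 0) + (if S 1 2 3 then 1 else 0)))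

lemma ind_eq {P : Prop} [Decidable P] {b : Bool} (h : P ↔ b = true) :
    (if P then 1 else 0) = b.toNat := by
  cases b <;> simp [h]

lemma bridge (S : Fin 4 → Fin 4 → Fin 4 → Prop) (hS : IsHyper3 S) :
    ∃ v : Fin 4 → Bool, ∀ x y z : Fin 4, x ≠ y → y ≠ z → x ≠ z →
      (S x y z ↔ evalB v x y z = true) := by
  classical
  refine ⟨fun m => match m with
    | 0 => decide (S 1 2 3) | 1 => decide (S 0 2 3)
    | 2 => decide (S 0 1 3) | 3 => decide (S 0 1 2), ?_⟩
  set v : Fin 4 → Bool := fun m => match m with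
    | 0 => decide (S 1 2 3) | 1 => decide (S 0 2 3)
    | 2 => decide (S 0 1 3) | 3 => decide (S 0 1 2) with hvdef
  have hv0 : v 0 = true ↔ S 1 2 3 := by simp [hvdef]
  have hv1 : v 1 = true ↔ S 0 2 3 := by simp [hvdef]
  have hv2 : v 2 = true ↔ S 0 1 3 := by simp [hvdef]
  have hv3 : v 3 = true ↔ S 0 1 2 := by simp [hvdef]
  have hc : ∀ a b c, S a b c → S b c a := hS.2.1
  have hf : ∀ a b c, a ≠ b → b ≠ c → a ≠ c → (S a b c ↔ ¬ S a c b) := hS.2.2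
  intro x y z hxy hyz hxz
  fin_cases x <;> fin_cases y <;> fin_cases z
  · exact absurd rfl hxy
  · exact absurd rfl hxy
  · exact absurd rfl hxy
  · exact absurd rfl hxy
  · exact absurd rfl hxz
  · exact absurd rfl hyz
  · exact (Iff.rfl : S 0 1 2 ↔ S 0 1 2).trans hv3.symm
  · exact (Iff.rfl : S 0 1 3 ↔ S 0 1 3).trans hv2.symm
  · exact absurd rfl hxz
  · exact ((hf 0 2 1 (by decide) (by decide) (by decide)) : S 0 2 1 ↔ ¬ S 0 1 2).trans ((not_congr hv3).symm.trans (by show ¬v 3 = true ↔ (!v 3) = true; simp))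
  · exact absurd rfl hyz
  · exact (Iff.rfl : S 0 2 3 ↔ S 0 2 3).trans hv1.symm
  · exact absurd rfl hxz
  · exact ((hf 0 3 1 (by decide) (by decide) (by decide)) : S 0 3 1 ↔ ¬ S 0 1 3).trans ((not_congr hv2).symm.trans (by show ¬v 2 = true ↔ (!v 2) = true; simp))
  · exact ((hf 0 3 2 (by decide) (by decide) (by decide)) : S 0 3 2 ↔ ¬ S 0 2 3).trans ((not_congr hv1).symm.trans (by show ¬v 1 = true ↔ (!v 1) = true; simp))
  · exact absurd rfl hyz
  · exact absurd rfl hyz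
  · exact absurd rfl hxz
  · exact ((Iff.trans ⟨fun h => hc _ _ _ h, fun h => hc _ _ _ (hc _ _ _ h)⟩ (hf 0 2 1 (by decide) (by decide) (by decide))) : S 1 0 2 ↔ ¬ S 0 1 2).trans ((not_congr hv3).symm.trans (by show ¬v 3 = true ↔ (!v 3) = true; simp))
  · exact ((Iff.trans ⟨fun h => hc _ _ _ h, fun h => hc _ _ _ (hc _ _ _ h)⟩ (hf 0 3 1 (by decide) (by decide) (by decide))) : S 1 0 3 ↔ ¬ S 0 1 3).trans ((not_congr hv2).symm.trans (by show ¬v 2 = true ↔ (!v 2) = true; simp))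
  · exact absurd rfl hxy
  · exact absurd rfl hxy
  · exact absurd rfl hxy
  · exact absurd rfl hxy
  · exact (⟨fun h => hc _ _ _ (hc _ _ _ h), fun h => hc _ _ _ h⟩ : S 1 2 0 ↔ S 0 1 2).trans hv3.symm
  · exact absurd rfl hxz
  · exact absurd rfl hyz
  · exact (Iff.rfl : S 1 2 3 ↔ S 1 2 3).trans hv0.symm
  · exact (⟨fun h => hc _ _ _ (hc _ _ _ h), fun h => hc _ _ _ h⟩ : S 1 3 0 ↔ S 0 1 3).trans hv2.symm
  · exact absurd rfl hxz
  · exact ((hf 1 3 2 (by decide) (by decide) (by decide)) : S 1 3 2 ↔ ¬ S 1 2 3).trans ((not_congr hv0).symm.trans (by show ¬v 0 = true ↔ (!v 0) = true; simp))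
  · exact absurd rfl hyz
  · exact absurd rfl hyz
  · exact (⟨fun h => hc _ _ _ h, fun h => hc _ _ _ (hc _ _ _ h)⟩ : S 2 0 1 ↔ S 0 1 2).trans hv3.symm
  · exact absurd rfl hxz
  · exact ((Iff.trans ⟨fun h => hc _ _ _ h, fun h => hc _ _ _ (hc _ _ _ h)⟩ (hf 0 3 2 (by decide) (by decide) (by decide))) : S 2 0 3 ↔ ¬ S 0 2 3).trans ((not_congr hv1).symm.trans (by show ¬v 1 = true ↔ (!v 1) = true; simp))
  · exact ((Iff.trans ⟨fun h => hc _ _ _ (hc _ _ _ h), fun h => hc _ _ _ h⟩ (hf 0 2 1 (by decide) (by decide) (by decide))) : S 2 1 0 ↔ ¬ S 0 1 2).trans ((not_congr hv3).symm.trans (by show ¬v 3 = true ↔ (!v 3) = true; simp))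
  · exact absurd rfl hyz
  · exact absurd rfl hxz
  · exact ((Iff.trans ⟨fun h => hc _ _ _ h, fun h => hc _ _ _ (hc _ _ _ h)⟩ (hf 1 3 2 (by decide) (by decide) (by decide))) : S 2 1 3 ↔ ¬ S 1 2 3).trans ((not_congr hv0).symm.trans (by show ¬v 0 = true ↔ (!v 0) = true; simp))
  · exact absurd rfl hxy
  · exact absurd rfl hxy
  · exact absurd rfl hxy
  · exact absurd rfl hxy
  · exact (⟨fun h => hc _ _ _ (hc _ _ _ h), fun h => hc _ _ _ h⟩ : S 2 3 0 ↔ S 0 2 3).trans hv1.symm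
  · exact (⟨fun h => hc _ _ _ (hc _ _ _ h), fun h => hc _ _ _ h⟩ : S 2 3 1 ↔ S 1 2 3).trans hv0.symm
  · exact absurd rfl hxz
  · exact absurd rfl hyz
  · exact absurd rfl hyz
  · exact (⟨fun h => hc _ _ _ h, fun h => hc _ _ _ (hc _ _ _ h)⟩ : S 3 0 1 ↔ S 0 1 3).trans hv2.symm
  · exact (⟨fun h => hc _ _ _ h, fun h => hc _ _ _ (hc _ _ _ h)⟩ : S 3 0 2 ↔ S 0 2 3).trans hv1.symm
  · exact absurd rfl hxz
  · exact ((Iff.trans ⟨fun h => hc _ _ _ (hc _ _ _ h), fun h => hc _ _ _ h⟩ (hf 0 3 1 (by decide) (by decide) (by decide))) : S 3 1 0 ↔ ¬ S 0 1 3).trans ((not_congr hv2).symm.trans (by show ¬v 2 = true ↔ (!v 2) = true; simp))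
  · exact absurd rfl hyz
  · exact (⟨fun h => hc _ _ _ h, fun h => hc _ _ _ (hc _ _ _ h)⟩ : S 3 1 2 ↔ S 1 2 3).trans hv0.symm
  · exact absurd rfl hxz
  · exact ((Iff.trans ⟨fun h => hc _ _ _ (hc _ _ _ h), fun h => hc _ _ _ h⟩ (hf 0 3 2 (by decide) (by decide) (by decide))) : S 3 2 0 ↔ ¬ S 0 2 3).trans ((not_congr hv1).symm.trans (by show ¬v 1 = true ↔ (!v 1) = true; simp))
  · exact ((Iff.trans ⟨fun h => hc _ _ _ (hc _ _ _ h), fun h => hc _ _ _ h⟩ (hf 1 3 2 (by decide) (by decide) (by decide))) : S 3 2 1 ↔ ¬ S 1 2 3).trans ((not_congr hv0).symm.trans (by show ¬v 0 = true ↔ (!v 0) = true; simp))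
  · exact absurd rfl hyz
  · exact absurd rfl hxz
  · exact absurd rfl hxy
  · exact absurd rfl hxy
  · exact absurd rfl hxy
  · exact absurd rfl hxy

lemma edgeCount_eq_N4 (S : Fin 4 → Fin 4 → Fin 4 → Prop) :
    edgeCount S (· < ·) = N4 S := by
  classical
  have hset : {t : Fin 4 × Fin 4 × Fin 4 | t.1 < t.2.1 ∧ t.2.1 < t.2.2 ∧ S t.1 t.2.1 t.2.2}
      = ↑(Finset.univ.filter
          (fun t : Fin 4 × Fin 4 × Fin 4 => t.1 < t.2.1 ∧ t.2.1 < t.2.2 ∧ S t.1 t.2.1 t.2.2)) := by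
    ext t; simp
  rw [edgeCount, hset, Set.ncard_coe_finset]
  have h2 : Finset.univ.filter
      (fun t : Fin 4 × Fin 4 × Fin 4 => t.1 < t.2.1 ∧ t.2.1 < t.2.2 ∧ S t.1 t.2.1 t.2.2)
      = (Finset.univ.filter (fun t : Fin 4 × Fin 4 × Fin 4 => t.1 < t.2.1 ∧ t.2.1 < t.2.2)).filter
          (fun t => S t.1 t.2.1 t.2.2) := by
    rw [Finset.filter_filter]
    apply Finset.filter_congr
    intro t _
    tauto
  have h3 : Finset.univ.filter (fun t : Fin 4 × Fin 4 × Fin 4 => t.1 < t.2.1 ∧ t.2.1 < t.2.2)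
      = {((0:Fin 4),(1:Fin 4),(2:Fin 4)), (0,1,3), (0,2,3), (1,2,3)} := by decide
  rw [h2, h3, Finset.card_filter]
  rw [Finset.sum_insert (by decide), Finset.sum_insert (by decide),
      Finset.sum_insert (by decide), Finset.sum_singleton]
  rfl

lemma edgeCount_equiv {T : Type*} (R : T → T → T → Prop) (r : T → T → Prop) (e : T ≃ Fin 4) :
    edgeCount R r = edgeCount (fun x y z => R (e.symm x) (e.symm y) (e.symm z))
      (fun x y => r (e.symm x) (e.symm y)) := by
  unfold edgeCount
  have himg : {t : Fin 4 × Fin 4 × Fin 4 |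
        r (e.symm t.1) (e.symm t.2.1) ∧ r (e.symm t.2.1) (e.symm t.2.2) ∧
          R (e.symm t.1) (e.symm t.2.1) (e.symm t.2.2)}
      = (fun t : T × T × T => (e t.1, e t.2.1, e t.2.2)) ''
        {t : T × T × T | r t.1 t.2.1 ∧ r t.2.1 t.2.2 ∧ R t.1 t.2.1 t.2.2} := by
    ext ⟨x, y, z⟩
    constructor
    · intro h
      exact ⟨(e.symm x, e.symm y, e.symm z), h, by simp⟩
    · rintro ⟨⟨a, b, c⟩, h, heq⟩
      simp only [Prod.mk.injEq] at heq
      obtain ⟨rfl, rfl, rfl⟩ := heq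
      simpa using h
  rw [himg, Set.ncard_image_of_injective]
  intro ⟨a, b, c⟩ ⟨a', b', c'⟩ h
  simp only [Prod.mk.injEq] at h ⊢
  exact ⟨e.injective h.1, e.injective h.2.1, e.injective h.2.2⟩

lemma keyc (S : Fin 4 → Fin 4 → Fin 4 → Prop) (hS : IsHyper3 S)
    (f : Fin 4 → Fin 4) (hfi : Function.Injective f) :
    edgeCount (fun x y z => S (f x) (f y) (f z)) (· < ·) % 2 = edgeCount S (· < ·) % 2 := by
  classical
  obtain ⟨v, hv⟩ := bridge S hS
  have hN : ∀ (g : Fin 4 → Fin 4), Function.Injective g →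
      N4 (fun x y z => S (g x) (g y) (g z)) = cntB v g := by
    intro g hg
    have d : ∀ i j : Fin 4, i ≠ j → g i ≠ g j := fun i j h => fun hh => h (hg hh)
    unfold N4 cntB
    rw [ind_eq (hv _ _ _ (d 0 1 (by decide)) (d 1 2 (by decide)) (d 0 2 (by decide))),
        ind_eq (hv _ _ _ (d 0 1 (by decide)) (d 1 3 (by decide)) (d 0 3 (by decide))),
        ind_eq (hv _ _ _ (d 0 2 (by decide)) (d 2 3 (by decide)) (d 0 3 (by decide))),
        ind_eq (hv _ _ _ (d 1 2 (by decide)) (d 2 3 (by decide)) (d 1 3 (by decide)))]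
  rw [edgeCount_eq_N4, edgeCount_eq_N4, hN f hfi,
      show N4 S = N4 (fun x y z => S (id x) (id y) (id z)) from rfl,
      hN id Function.injective_id]
  exact cntB_parity v f hfi

lemma order_equiv {T : Type*} [Fintype T] (hT : Fintype.card T = 4)
    (r : T → T → Prop) (hr : IsStrictTotalOrder T r) :
    ∃ e : T ≃ Fin 4, ∀ a b, r a b ↔ e a < e b := by
  classical
  letI : LinearOrder T := @linearOrderOfSTO T r hr (Classical.decRel r)
  let φ := monoEquivOfFin T hT
  refine ⟨φ.symm.toEquiv, fun a b => ?_⟩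
  have : r a b ↔ a < b := Iff.rfl
  rw [this, ← φ.symm.lt_iff_lt]
  rfl

lemma edgeCount_std {T : Type*} (R : T → T → T → Prop) (r : T → T → Prop)
    (e : T ≃ Fin 4) (he : ∀ a b, r a b ↔ e a < e b) :
    edgeCount R r = edgeCount (fun x y z => R (e.symm x) (e.symm y) (e.symm z)) (· < ·) := by
  rw [edgeCount_equiv R r e]
  congr 1
  funext x y
  rw [eq_iff_iff, he]
  simp

/-- if the hypergraph associated to a 3-hypertournament on 4 elements has
an odd number of hyperedges for one linear order, it does so for every linear order. -/
theorem stmt3 {T : Type*} [Fintype T] (hT : Fintype.card T = 4)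
    (R : T → T → T → Prop) (hR : IsHyper3 R)
    (r₀ : T → T → Prop) (h₀ : IsStrictTotalOrder T r₀)
    (hodd : Odd (edgeCount R r₀)) :
    ∀ r : T → T → Prop, IsStrictTotalOrder T r → Odd (edgeCount R r) := by
  intro r hr
  obtain ⟨e₀, he₀⟩ := order_equiv hT r₀ h₀
  obtain ⟨e, he⟩ := order_equiv hT r hr
  set S : Fin 4 → Fin 4 → Fin 4 → Prop :=
    fun x y z => R (e₀.symm x) (e₀.symm y) (e₀.symm z) with hSdef
  have hS : IsHyper3 S := by
    refine ⟨fun a b c h => ?_, fun a b c h => hR.2.1 _ _ _ h, fun a b c hab hbc hac => ?_⟩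
    · obtain ⟨h1, h2, h3⟩ := hR.1 _ _ _ h
      exact ⟨fun hh => h1 (by rw [hh]), fun hh => h2 (by rw [hh]), fun hh => h3 (by rw [hh])⟩
    · exact hR.2.2 _ _ _ (fun h => hab (e₀.symm.injective h))
        (fun h => hbc (e₀.symm.injective h)) (fun h => hac (e₀.symm.injective h))
  have h0 : edgeCount R r₀ = edgeCount S (· < ·) := edgeCount_std R r₀ e₀ he₀
  set f : Fin 4 → Fin 4 := fun x => e₀ (e.symm x) with hfdef
  have hfi : Function.Injective f := fun a b h => by
    simpa [hfdef] using e.symm.injective (e₀.injective h)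
  have h1 : edgeCount R r = edgeCount (fun x y z => S (f x) (f y) (f z)) (· < ·) := by
    rw [edgeCount_std R r e he]
    congr 1
    funext x y z
    simp [hSdef, hfdef]
  rw [Nat.odd_iff] at hodd ⊢
  rw [h1, keyc S hS f hfi, ← h0]
  exact hodd
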